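/- Let c₁, c₂ > 0 and define A(v) = c₁·v + c₂·‖v‖·v on a real inner product space E. Then for all u, v ∈ E, ⟨A(u) − A(v), u − v⟩ ≥ c₁·‖u − v‖². -/

import Mathlib

/-! The Darcy term `c₁ • v` contributes exactly `c₁ ‖u - v‖²`, so it suffices that the
Forchheimer term `v ↦ ‖v‖ • v` is monotone. By Cauchy–Schwarz,
`⟪‖u‖ • u - ‖v‖ • v, u - v⟫ ≥ ‖u‖³ - (‖u‖ + ‖v‖) ‖u‖ ‖v‖ + ‖v‖³ = (‖u‖ + ‖v‖) (‖u‖ - ‖v‖)²`. -/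

open RealInnerProductSpace

theorem inner_norm_smul_sub_norm_smul_sub_nonneg {E : Type*} [NormedAddCommGroup E]
    [InnerProductSpace ℝ E] (u v : E) : 0 ≤ ⟪‖u‖ • u - ‖v‖ • v, u - v⟫ := by
  have hexpand : ⟪‖u‖ • u - ‖v‖ • v, u - v⟫ =
      ‖u‖ ^ 3 + ‖v‖ ^ 3 - (‖u‖ + ‖v‖) * ⟪u, v⟫ := by
    simp only [inner_sub_left, inner_sub_right, real_inner_smul_left,
      real_inner_self_eq_norm_sq, real_inner_comm u v]
    ring
  rw [hexpand]
  nlinarith [real_inner_le_norm u v, norm_nonneg u, norm_nonneg v,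
    mul_nonneg (add_nonneg (norm_nonneg u) (norm_nonneg v)) (sq_nonneg (‖u‖ - ‖v‖))]

theorem darcy_forchheimer_monotone_general {E : Type*} [NormedAddCommGroup E] [InnerProductSpace ℝ E]
    (c₁ c₂ : ℝ) (hc₂ : 0 < c₂)
    (A : E → E) (hA : ∀ v, A v = c₁ • v + c₂ • (‖v‖ • v)) (u v : E) :
    c₁ * ‖u - v‖ ^ 2 ≤ ⟪A u - A v, u - v⟫ := by
  have hsplit : A u - A v = c₁ • (u - v) + c₂ • (‖u‖ • u - ‖v‖ • v) := by
    rw [hA, hA, smul_sub, smul_sub]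
    abel
  rw [hsplit, inner_add_left, real_inner_smul_left, real_inner_smul_left,
    real_inner_self_eq_norm_sq, le_add_iff_nonneg_right]
  exact mul_nonneg hc₂.le (inner_norm_smul_sub_norm_smul_sub_nonneg u v)

theorem darcy_forchheimer_monotone {E : Type*} [NormedAddCommGroup E] [InnerProductSpace ℝ E]
    (c₁ c₂ : ℝ) (hc₁ : 0 < c₁) (hc₂ : 0 < c₂)
    (A : E → E) (hA : ∀ v, A v = c₁ • v + c₂ • (‖v‖ • v)) (u v : E) :
    c₁ * ‖u - v‖ ^ 2 ≤ ⟪A u - A v, u - v⟫ :=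
  darcy_forchheimer_monotone_general c₁ c₂ hc₂ A hA u v
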